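/- arXiv:1006.3902 — 2 statements merged into one kernel-verified Lean document; each statement's English description precedes it below -/
import Mathlib

section
/- (Corollary 1) The function ρ_ω defined by ρ_ω(μ₁, μ₂) = min{ diam X, H(μ₁, μ₂) } is a metric on the set I_ω(X) of finitely supported idempotent probability measures on X. -/
open Filter Topology

variable {X : Type*}

/-- An idempotent probability measure on a topological space `X`:
a functional on `C(X, ℝ)` preserving constants, shifting by constants,
and turning pointwise max into max. -/
def IsIPM [TopologicalSpace X] (μ : C(X, ℝ) → ℝ) : Prop :=
  (∀ c : ℝ, μ (ContinuousMap.const X c) = c) ∧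
  (∀ (φ : C(X, ℝ)) (c : ℝ), μ (φ + ContinuousMap.const X c) = μ φ + c) ∧
  (∀ φ ψ : C(X, ℝ), μ (φ ⊔ ψ) = max (μ φ) (μ ψ))

/-- `μ` is represented as `μ(φ) = max_i (λ i + φ (x i))` with `x` pairwise distinct
and `max_i λ i = 0`. -/
def IsRepr [TopologicalSpace X] (μ : C(X, ℝ) → ℝ) {n : ℕ}
    (x : Fin n → X) (lam : Fin n → ℝ) : Prop :=
  0 < n ∧ Function.Injective x ∧ (⨆ i, lam i) = 0 ∧
    ∀ φ : C(X, ℝ), μ φ = ⨆ i, (lam i + φ (x i))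

/-- A finitely supported idempotent probability measure. -/
def IsFinSuppIPM [TopologicalSpace X] (μ : C(X, ℝ) → ℝ) : Prop :=
  ∃ (n : ℕ) (x : Fin n → X) (lam : Fin n → ℝ), IsRepr μ x lam

/-- `ξ` is a coupling of `μ1` and `μ2`: an idempotent probability measure on `X × X`
whose marginals are `μ1` and `μ2`. -/
def IsCoupling [TopologicalSpace X] (μ1 μ2 : C(X, ℝ) → ℝ)
    (ξ : C(X × X, ℝ) → ℝ) : Prop :=
  IsIPM ξ ∧
  (∀ φ : C(X, ℝ), ξ (φ.comp ContinuousMap.fst) = μ1 φ) ∧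
  (∀ φ : C(X, ℝ), ξ (φ.comp ContinuousMap.snd) = μ2 φ)

/-- A coupling matrix for weight vectors `lam1`, `lam2`: entries in `ℝ ∪ {−∞}`,
with row maxima `lam1` and column maxima `lam2`. -/
def IsCouplingMatrix {n1 n2 : ℕ} (lam1 : Fin n1 → ℝ) (lam2 : Fin n2 → ℝ)
    (γ : Fin n1 → Fin n2 → WithBot ℝ) : Prop :=
  (∀ j, (Finset.univ.sup fun k => γ j k) = (lam1 j : WithBot ℝ)) ∧
  (∀ k, (Finset.univ.sup fun j => γ j k) = (lam2 k : WithBot ℝ))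

/-- The cost `max{ |λ_{2k} − λ_{1j}| + ρ(x_{1j}, x_{2k}) : γ_{jk} ≠ −∞ }`. -/
noncomputable def matCost [MetricSpace X] {n1 n2 : ℕ}
    (x1 : Fin n1 → X) (lam1 : Fin n1 → ℝ) (x2 : Fin n2 → X) (lam2 : Fin n2 → ℝ)
    (γ : Fin n1 → Fin n2 → WithBot ℝ) : ℝ :=
  sSup {c : ℝ | ∃ j k, γ j k ≠ ⊥ ∧ c = |lam2 k - lam1 j| + dist (x1 j) (x2 k)}

/-- `H(μ1, μ2)`: the infimum of costs over all coupling matrices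
(for all representations of `μ1`, `μ2`; the representation is unique). -/
noncomputable def Hdist [MetricSpace X] (μ1 μ2 : C(X, ℝ) → ℝ) : ℝ :=
  sInf {c : ℝ | ∃ (n1 n2 : ℕ) (x1 : Fin n1 → X) (lam1 : Fin n1 → ℝ)
      (x2 : Fin n2 → X) (lam2 : Fin n2 → ℝ) (γ : Fin n1 → Fin n2 → WithBot ℝ),
      IsRepr μ1 x1 lam1 ∧ IsRepr μ2 x2 lam2 ∧ IsCouplingMatrix lam1 lam2 γ ∧
      c = matCost x1 lam1 x2 lam2 γ}

/-- `ρ_ω(μ1, μ2) = min{diam X, H(μ1, μ2)}`. -/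
noncomputable def rhoOmega [MetricSpace X] (μ1 μ2 : C(X, ℝ) → ℝ) : ℝ :=
  min (Metric.diam (Set.univ : Set X)) (Hdist μ1 μ2)

/-!
A finitely supported idempotent measure determines its atoms and weights: testing it against the
steep cones `y ↦ -K ρ(y, p)` recovers the weight at `p`, and sends it to `-∞` off the support.
So `H` may be computed from fixed representations, and then it behaves like a transport cost:
the diagonal matrix has cost `0`, transposition preserves cost, and gluing couplings of
`(μ₁, μ₂)` and `(μ₂, μ₃)` by the max-plus product `γ₁₂ ⊙ diag(-λ₂) ⊙ γ₂₃` couples `(μ₁, μ₃)`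
at cost at most the sum, by the triangle inequalities for `|·|` and `ρ`. If `H(μ₁, μ₂) = 0`,
every atom of `μ₁` has partners among the atoms of `μ₂` arbitrarily close in position and weight,
so uniform continuity of the test functions gives `μ₁ ≤ μ₂`. Truncating by `diam X ≥ 0` keeps the
triangle inequality, and `diam X = 0` forces `X` to be a point, where all such measures coincide.
-/

open Finset

lemma WithBot.finset_sup_add {ι α : Type*} [AddCommMonoid α] [LinearOrder α] [IsOrderedAddMonoid α]
    (s : Finset ι) (f : ι → WithBot α) (c : WithBot α) :
    s.sup f + c = s.sup fun i => f i + c :=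
  apply_sup_eq_sup_comp_of_linearOrder (· + c) (fun _ _ h => add_le_add_left h c)
    (WithBot.bot_add c)

lemma WithBot.add_finset_sup {ι α : Type*} [AddCommMonoid α] [LinearOrder α] [IsOrderedAddMonoid α]
    (s : Finset ι) (f : ι → WithBot α) (c : WithBot α) :
    c + s.sup f = s.sup fun i => c + f i := by
  simpa only [add_comm c] using WithBot.finset_sup_add s f c

lemma WithBot.sup_univ_coe_eq_ciSup {ι α : Type*} [Fintype ι] [Nonempty ι]
    [ConditionallyCompleteLattice α] (f : ι → α) :
    univ.sup (fun i => (f i : WithBot α)) = ↑(⨆ i, f i) := by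
  rw [← sup'_univ_eq_ciSup, coe_sup']
  rfl

lemma Finset.sup_univ_comp_equiv {ι β α : Type*} [Fintype ι] [Fintype β] [SemilatticeSup α]
    [OrderBot α] (σ : ι ≃ β) (f : β → α) :
    univ.sup (f ∘ σ) = univ.sup f := by
  rw [← map_univ_equiv σ, sup_map]
  rfl

lemma min_le_min_add_min {d a b c : ℝ} (hd : 0 ≤ d) (ha : 0 ≤ a) (hb : 0 ≤ b) (h : c ≤ a + b) :
    min d c ≤ min d a + min d b := by
  rcases le_total d a with hda | hda
  · rw [min_eq_left hda]
    linarith [min_le_left d c, le_min hd hb]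
  · rcases le_total d b with hdb | hdb
    · rw [min_eq_left hdb]
      linarith [min_le_left d c, le_min hd ha]
    · rw [min_eq_right hda, min_eq_right hdb]
      linarith [min_le_right d c]

def distCone [MetricSpace X] (p : X) (K : ℝ) : C(X, ℝ) := ⟨fun y => -(K * dist y p), by fun_prop⟩

namespace IsRepr

section Topological

variable [TopologicalSpace X] {μ : C(X, ℝ) → ℝ} {n : ℕ} {x : Fin n → X} {lam : Fin n → ℝ}

lemma le_apply (h : IsRepr μ x lam) (φ : C(X, ℝ)) (i : Fin n) : lam i + φ (x i) ≤ μ φ := by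
  rw [h.2.2.2]
  exact le_ciSup (Finite.bddAbove_range fun i => lam i + φ (x i)) i

lemma apply_le (h : IsRepr μ x lam) {φ : C(X, ℝ)} {c : ℝ} (hc : ∀ i, lam i + φ (x i) ≤ c) :
    μ φ ≤ c := by
  have : Nonempty (Fin n) := ⟨⟨0, h.1⟩⟩
  rw [h.2.2.2]
  exact ciSup_le hc

lemma lam_le_zero (h : IsRepr μ x lam) (i : Fin n) : lam i ≤ 0 :=
  h.2.2.1 ▸ le_ciSup (Finite.bddAbove_range lam) i

lemma exists_lam_eq_zero (h : IsRepr μ x lam) : ∃ i, lam i = 0 := by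
  have : Nonempty (Fin n) := ⟨⟨0, h.1⟩⟩
  obtain ⟨i, hi⟩ : ∃ i, lam i = ⨆ i, lam i := exists_eq_ciSup_of_finite
  exact ⟨i, hi.trans h.2.2.1⟩

lemma apply_eq_of_subsingleton [Subsingleton X] (h : IsRepr μ x lam) (φ : C(X, ℝ)) (p : X) :
    μ φ = φ p := by
  obtain ⟨i, hi⟩ := h.exists_lam_eq_zero
  refine le_antisymm (h.apply_le fun j => ?_) ?_
  · rw [Subsingleton.elim (x j) p]
    linarith [h.lam_le_zero j]
  · simpa [hi, Subsingleton.elim (x i) p] using h.le_apply φ i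

end Topological

variable [MetricSpace X] {μ : C(X, ℝ) → ℝ} {n n' : ℕ} {x : Fin n → X} {lam : Fin n → ℝ}
  {x' : Fin n' → X} {lam' : Fin n' → ℝ}

lemma lam_le_apply_distCone (h : IsRepr μ x lam) (i : Fin n) (K : ℝ) :
    lam i ≤ μ (distCone (x i) K) := by
  simpa [distCone] using h.le_apply (distCone (x i) K) i

lemma exists_apply_distCone_le (h : IsRepr μ x lam) (p : X) {a : ℝ}
    (ha : ∀ i, x i = p → lam i ≤ a) : ∃ K, μ (distCone p K) ≤ a := by
  -- At `x i = p` the quotient is the junk value `0`; those terms are bounded by `ha` instead.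
  refine ⟨⨆ i, (lam i - a) / dist (x i) p, h.apply_le fun i => ?_⟩
  have hK := le_ciSup (Finite.bddAbove_range fun i => (lam i - a) / dist (x i) p) i
  change lam i + -(_ * dist (x i) p) ≤ a
  rcases eq_or_ne (x i) p with hxi | hxi
  · simp [hxi, ha i hxi]
  · rw [div_le_iff₀ (dist_pos.mpr hxi)] at hK
    linarith

lemma mem_range (h : IsRepr μ x lam) (h' : IsRepr μ x' lam') (i : Fin n) :
    x i ∈ Set.range x' := by
  by_contra hi
  obtain ⟨K, hK⟩ :=
    h'.exists_apply_distCone_le (x i) (a := lam i - 1) fun k hk => (hi ⟨k, hk⟩).elim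
  linarith [h.lam_le_apply_distCone i K]

lemma lam_le_of_eq (h : IsRepr μ x lam) (h' : IsRepr μ x' lam') {i : Fin n} {k : Fin n'}
    (hk : x' k = x i) : lam i ≤ lam' k := by
  obtain ⟨K, hK⟩ := h'.exists_apply_distCone_le (x i) (a := lam' k) fun k' hk' =>
    (h'.2.1 (hk'.trans hk.symm)) ▸ le_rfl
  exact (h.lam_le_apply_distCone i K).trans hK

lemma exists_equiv (h : IsRepr μ x lam) (h' : IsRepr μ x' lam') :
    ∃ σ : Fin n ≃ Fin n', x' ∘ σ = x ∧ lam' ∘ σ = lam := by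
  choose e he using h.mem_range h'
  have he_bij : Function.Bijective e := by
    refine ⟨fun a b hab => h.2.1 ?_, fun k => ?_⟩
    · rw [← he a, ← he b, hab]
    · obtain ⟨i, hi⟩ := h'.mem_range h k
      exact ⟨i, h'.2.1 ((he i).trans hi)⟩
  refine ⟨Equiv.ofBijective e he_bij, funext he, funext fun i => ?_⟩
  exact le_antisymm (h'.lam_le_of_eq h (he i).symm) (h.lam_le_of_eq h' (he i))

end IsRepr

namespace IsCouplingMatrix

variable {n1 n2 : ℕ} {lam1 : Fin n1 → ℝ} {lam2 : Fin n2 → ℝ} {γ : Fin n1 → Fin n2 → WithBot ℝ}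

lemma exists_ne_bot (h : IsCouplingMatrix lam1 lam2 γ) (j : Fin n1) : ∃ k, γ j k ≠ ⊥ := by
  by_contra! hj
  have hrow := h.1 j
  rw [(Finset.sup_eq_bot_iff _ _).mpr fun k _ => hj k] at hrow
  exact WithBot.bot_ne_coe hrow

lemma transpose (h : IsCouplingMatrix lam1 lam2 γ) :
    IsCouplingMatrix lam2 lam1 fun k j => γ j k :=
  ⟨h.2, h.1⟩

lemma comp_equiv {m : ℕ} (h : IsCouplingMatrix lam1 lam2 γ) (σ : Fin m ≃ Fin n1) :
    IsCouplingMatrix (lam1 ∘ σ) lam2 fun j k => γ (σ j) k :=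
  ⟨fun j => h.1 (σ j), fun k => (Finset.sup_univ_comp_equiv σ (γ · k)).trans (h.2 k)⟩

end IsCouplingMatrix

section CouplingMatrix

variable {n n1 n2 n3 : ℕ} {lam1 : Fin n1 → ℝ} {lam2 : Fin n2 → ℝ} {lam3 : Fin n3 → ℝ}

lemma isCouplingMatrix_prod (hn1 : 0 < n1) (hn2 : 0 < n2) (h1 : ⨆ j, lam1 j = 0)
    (h2 : ⨆ k, lam2 k = 0) :
    IsCouplingMatrix lam1 lam2 fun j k => ((lam1 j + lam2 k : ℝ) : WithBot ℝ) := by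
  have : Nonempty (Fin n1) := ⟨⟨0, hn1⟩⟩
  have : Nonempty (Fin n2) := ⟨⟨0, hn2⟩⟩
  constructor
  · intro j
    simp_rw [WithBot.coe_add, ← WithBot.add_finset_sup, WithBot.sup_univ_coe_eq_ciSup, h2]
    simp
  · intro k
    simp_rw [WithBot.coe_add, ← WithBot.finset_sup_add, WithBot.sup_univ_coe_eq_ciSup, h1]
    simp

lemma isCouplingMatrix_diag (lam : Fin n → ℝ) :
    IsCouplingMatrix lam lam fun j k => if j = k then (lam j : WithBot ℝ) else ⊥ := by
  constructor
  · intro j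
    refine le_antisymm (Finset.sup_le fun k _ => ?_) ?_
    · dsimp only
      split_ifs <;> simp
    · simpa using Finset.le_sup (f := fun k => if j = k then (lam j : WithBot ℝ) else ⊥)
        (mem_univ j)
  · intro k
    refine le_antisymm (Finset.sup_le fun j _ => ?_) ?_
    · dsimp only
      split_ifs with hjk <;> simp [hjk]
    · simpa using Finset.le_sup (f := fun j => if j = k then (lam j : WithBot ℝ) else ⊥)
        (mem_univ k)

def couplingComp (lam2 : Fin n2 → ℝ) (γ12 : Fin n1 → Fin n2 → WithBot ℝ)
    (γ23 : Fin n2 → Fin n3 → WithBot ℝ) : Fin n1 → Fin n3 → WithBot ℝ :=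
  fun j l => univ.sup fun k => γ12 j k + (γ23 k l + ((-lam2 k : ℝ) : WithBot ℝ))

lemma IsCouplingMatrix.comp {γ12 : Fin n1 → Fin n2 → WithBot ℝ}
    {γ23 : Fin n2 → Fin n3 → WithBot ℝ} (h12 : IsCouplingMatrix lam1 lam2 γ12)
    (h23 : IsCouplingMatrix lam2 lam3 γ23) :
    IsCouplingMatrix lam1 lam3 (couplingComp lam2 γ12 γ23) := by
  constructor
  · intro j
    unfold couplingComp
    rw [Finset.sup_comm]
    simp_rw [← WithBot.add_finset_sup, ← WithBot.finset_sup_add, h23.1, ← WithBot.coe_add,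
      add_neg_cancel, WithBot.coe_zero, add_zero]
    exact h12.1 j
  · intro l
    unfold couplingComp
    rw [Finset.sup_comm]
    simp_rw [← WithBot.finset_sup_add, h12.2, add_left_comm _ (γ23 _ l), ← WithBot.coe_add,
      add_neg_cancel, WithBot.coe_zero, add_zero]
    exact h23.2 l

end CouplingMatrix

section MatCost

variable [MetricSpace X] {n n1 n2 n3 : ℕ} {x1 : Fin n1 → X} {x2 : Fin n2 → X} {x3 : Fin n3 → X}
  {lam1 : Fin n1 → ℝ} {lam2 : Fin n2 → ℝ} {lam3 : Fin n3 → ℝ} {γ : Fin n1 → Fin n2 → WithBot ℝ}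

lemma le_matCost {j : Fin n1} {k : Fin n2} (hjk : γ j k ≠ ⊥) :
    |lam2 k - lam1 j| + dist (x1 j) (x2 k) ≤ matCost x1 lam1 x2 lam2 γ := by
  refine le_csSup (BddAbove.mono ?_ (Finite.bddAbove_range fun p : Fin n1 × Fin n2 =>
    |lam2 p.2 - lam1 p.1| + dist (x1 p.1) (x2 p.2))) ⟨j, k, hjk, rfl⟩
  rintro _ ⟨j, k, -, rfl⟩
  exact ⟨(j, k), rfl⟩

lemma matCost_nonneg : 0 ≤ matCost x1 lam1 x2 lam2 γ :=
  Real.sSup_nonneg (by rintro _ ⟨j, k, -, rfl⟩; positivity)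

lemma matCost_le {c : ℝ} (hc : 0 ≤ c)
    (h : ∀ j k, γ j k ≠ ⊥ → |lam2 k - lam1 j| + dist (x1 j) (x2 k) ≤ c) :
    matCost x1 lam1 x2 lam2 γ ≤ c :=
  Real.sSup_le (by rintro _ ⟨j, k, hjk, rfl⟩; exact h j k hjk) hc

lemma matCost_transpose_le :
    matCost x2 lam2 x1 lam1 (fun k j => γ j k) ≤ matCost x1 lam1 x2 lam2 γ :=
  matCost_le matCost_nonneg fun k j hjk => by
    rw [abs_sub_comm, dist_comm]
    exact le_matCost hjk

lemma matCost_transpose :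
    matCost x2 lam2 x1 lam1 (fun k j => γ j k) = matCost x1 lam1 x2 lam2 γ :=
  le_antisymm matCost_transpose_le matCost_transpose_le

lemma matCost_comp_equiv_le {m : ℕ} (σ : Fin m ≃ Fin n1) :
    matCost (x1 ∘ σ) (lam1 ∘ σ) x2 lam2 (fun j k => γ (σ j) k) ≤ matCost x1 lam1 x2 lam2 γ :=
  matCost_le matCost_nonneg fun _ _ hjk => le_matCost hjk

lemma matCost_diag (x : Fin n → X) (lam : Fin n → ℝ) :
    matCost x lam x lam (fun j k => if j = k then (lam j : WithBot ℝ) else ⊥) = 0 := by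
  refine le_antisymm (matCost_le le_rfl fun j k hjk => ?_) matCost_nonneg
  by_cases h : j = k
  · simp [h]
  · simp [h] at hjk

lemma matCost_couplingComp_le {γ12 : Fin n1 → Fin n2 → WithBot ℝ}
    {γ23 : Fin n2 → Fin n3 → WithBot ℝ} :
    matCost x1 lam1 x3 lam3 (couplingComp lam2 γ12 γ23)
      ≤ matCost x1 lam1 x2 lam2 γ12 + matCost x2 lam2 x3 lam3 γ23 := by
  refine matCost_le (add_nonneg matCost_nonneg matCost_nonneg) fun j l hjl => ?_
  obtain ⟨k, hk⟩ : ∃ k, γ12 j k + (γ23 k l + ((-lam2 k : ℝ) : WithBot ℝ)) ≠ ⊥ := by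
    by_contra! h
    exact hjl ((Finset.sup_eq_bot_iff _ _).mpr fun k _ => h k)
  simp only [WithBot.add_ne_bot] at hk
  calc |lam3 l - lam1 j| + dist (x1 j) (x3 l)
      ≤ (|lam2 k - lam1 j| + dist (x1 j) (x2 k)) + (|lam3 l - lam2 k| + dist (x2 k) (x3 l)) := by
        linarith [abs_sub_le (lam3 l) (lam2 k) (lam1 j), dist_triangle (x1 j) (x2 k) (x3 l)]
    _ ≤ _ := add_le_add (le_matCost hk.1) (le_matCost hk.2.1)

end MatCost

section Hdist

variable [MetricSpace X] {μ1 μ2 μ3 : C(X, ℝ) → ℝ} {n1 n2 n2' n3 : ℕ}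
  {x1 : Fin n1 → X} {x2 : Fin n2 → X} {x2' : Fin n2' → X} {x3 : Fin n3 → X}
  {lam1 : Fin n1 → ℝ} {lam2 : Fin n2 → ℝ} {lam2' : Fin n2' → ℝ} {lam3 : Fin n3 → ℝ}

lemma Hdist_nonneg (μ1 μ2 : C(X, ℝ) → ℝ) : 0 ≤ Hdist μ1 μ2 :=
  Real.sInf_nonneg (by rintro _ ⟨_, _, _, _, _, _, _, -, -, -, rfl⟩; exact matCost_nonneg)

lemma Hdist_le_matCost {γ : Fin n1 → Fin n2 → WithBot ℝ} (h1 : IsRepr μ1 x1 lam1)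
    (h2 : IsRepr μ2 x2 lam2) (hγ : IsCouplingMatrix lam1 lam2 γ) :
    Hdist μ1 μ2 ≤ matCost x1 lam1 x2 lam2 γ := by
  unfold Hdist
  refine csInf_le ⟨0, ?_⟩ ⟨n1, n2, x1, lam1, x2, lam2, γ, h1, h2, hγ, rfl⟩
  rintro _ ⟨_, _, _, _, _, _, _, -, -, -, rfl⟩
  exact matCost_nonneg

lemma exists_matCost_lt_of_Hdist_lt (h1 : IsFinSuppIPM μ1) (h2 : IsFinSuppIPM μ2) {t : ℝ}
    (ht : Hdist μ1 μ2 < t) :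
    ∃ (n1 n2 : ℕ) (x1 : Fin n1 → X) (lam1 : Fin n1 → ℝ)
      (x2 : Fin n2 → X) (lam2 : Fin n2 → ℝ) (γ : Fin n1 → Fin n2 → WithBot ℝ),
      IsRepr μ1 x1 lam1 ∧ IsRepr μ2 x2 lam2 ∧ IsCouplingMatrix lam1 lam2 γ ∧
      matCost x1 lam1 x2 lam2 γ < t := by
  obtain ⟨n1, x1, lam1, hr1⟩ := h1
  obtain ⟨n2, x2, lam2, hr2⟩ := h2
  obtain ⟨_, ⟨n1, n2, x1, lam1, x2, lam2, γ, hr1, hr2, hγ, rfl⟩, hlt⟩ :=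
    exists_lt_of_csInf_lt (by exact ⟨_, n1, n2, x1, lam1, x2, lam2, _, hr1, hr2,
      isCouplingMatrix_prod hr1.1 hr2.1 hr1.2.2.1 hr2.2.2.1, rfl⟩) ht
  exact ⟨n1, n2, x1, lam1, x2, lam2, γ, hr1, hr2, hγ, hlt⟩

lemma Hdist_comm (μ1 μ2 : C(X, ℝ) → ℝ) : Hdist μ1 μ2 = Hdist μ2 μ1 := by
  unfold Hdist
  congr 1
  ext c
  constructor <;> rintro ⟨n1, n2, x1, lam1, x2, lam2, γ, h1, h2, hγ, rfl⟩ <;>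
    exact ⟨n2, n1, x2, lam2, x1, lam1, _, h2, h1, hγ.transpose, matCost_transpose.symm⟩

lemma Hdist_self (h : IsFinSuppIPM μ1) : Hdist μ1 μ1 = 0 := by
  obtain ⟨n, x, lam, hr⟩ := h
  refine le_antisymm ?_ (Hdist_nonneg μ1 μ1)
  exact (Hdist_le_matCost hr hr (isCouplingMatrix_diag lam)).trans_eq (matCost_diag x lam)

lemma Hdist_le_matCost_add_matCost {γ12 : Fin n1 → Fin n2 → WithBot ℝ}
    {γ23 : Fin n2' → Fin n3 → WithBot ℝ} (h1 : IsRepr μ1 x1 lam1) (h2 : IsRepr μ2 x2 lam2)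
    (h2' : IsRepr μ2 x2' lam2') (h3 : IsRepr μ3 x3 lam3) (h12 : IsCouplingMatrix lam1 lam2 γ12)
    (h23 : IsCouplingMatrix lam2' lam3 γ23) :
    Hdist μ1 μ3 ≤ matCost x1 lam1 x2 lam2 γ12 + matCost x2' lam2' x3 lam3 γ23 := by
  obtain ⟨σ, rfl, rfl⟩ := h2.exists_equiv h2'
  calc Hdist μ1 μ3
      ≤ matCost x1 lam1 x3 lam3 (couplingComp (lam2' ∘ σ) γ12 fun k l => γ23 (σ k) l) :=
        Hdist_le_matCost h1 h3 (h12.comp (h23.comp_equiv σ))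
    _ ≤ _ := matCost_couplingComp_le (x2 := x2' ∘ σ)
    _ ≤ _ := add_le_add_right (matCost_comp_equiv_le σ) _

lemma Hdist_triangle (h1 : IsFinSuppIPM μ1) (h2 : IsFinSuppIPM μ2) (h3 : IsFinSuppIPM μ3) :
    Hdist μ1 μ3 ≤ Hdist μ1 μ2 + Hdist μ2 μ3 := by
  refine le_of_forall_pos_lt_add fun ε hε => ?_
  obtain ⟨_, _, x1, lam1, x2, lam2, γ12, hr1, hr2, hγ12, hlt12⟩ :=
    exists_matCost_lt_of_Hdist_lt h1 h2 (lt_add_of_pos_right (Hdist μ1 μ2) (half_pos hε))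
  obtain ⟨_, _, x2', lam2', x3, lam3, γ23, hr2', hr3, hγ23, hlt23⟩ :=
    exists_matCost_lt_of_Hdist_lt h2 h3 (lt_add_of_pos_right (Hdist μ2 μ3) (half_pos hε))
  linarith [Hdist_le_matCost_add_matCost hr1 hr2 hr2' hr3 hγ12 hγ23]

end Hdist

section Separation

lemma IsCouplingMatrix.apply_le_apply_add [TopologicalSpace X] {μ1 μ2 : C(X, ℝ) → ℝ}
    {n1 n2 : ℕ} {x1 : Fin n1 → X} {x2 : Fin n2 → X} {lam1 : Fin n1 → ℝ} {lam2 : Fin n2 → ℝ}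
    {γ : Fin n1 → Fin n2 → WithBot ℝ} (hγ : IsCouplingMatrix lam1 lam2 γ)
    (h1 : IsRepr μ1 x1 lam1) (h2 : IsRepr μ2 x2 lam2) {φ : C(X, ℝ)} {ε : ℝ}
    (hφ : ∀ j k, γ j k ≠ ⊥ → lam1 j + φ (x1 j) ≤ lam2 k + φ (x2 k) + ε) :
    μ1 φ ≤ μ2 φ + ε :=
  h1.apply_le fun j =>
    let ⟨k, hk⟩ := hγ.exists_ne_bot j
    (hφ j k hk).trans (add_le_add_left (h2.le_apply φ k) ε)

variable [MetricSpace X] {μ1 μ2 : C(X, ℝ) → ℝ}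

lemma le_of_Hdist_eq_zero [CompactSpace X] (h1 : IsFinSuppIPM μ1) (h2 : IsFinSuppIPM μ2)
    (h : Hdist μ1 μ2 = 0) (φ : C(X, ℝ)) : μ1 φ ≤ μ2 φ := by
  refine le_of_forall_pos_le_add fun ε hε => ?_
  obtain ⟨δ, hδ, hφ⟩ := Metric.uniformContinuous_iff.mp
    (CompactSpace.uniformContinuous_of_continuous φ.continuous) (ε / 2) (half_pos hε)
  obtain ⟨_, _, x1, lam1, x2, lam2, γ, hr1, hr2, hγ, hlt⟩ :=
    exists_matCost_lt_of_Hdist_lt h1 h2 (h ▸ lt_min hδ (half_pos hε))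
  refine hγ.apply_le_apply_add hr1 hr2 fun j k hjk => ?_
  have hcost := (le_matCost hjk).trans_lt hlt
  have hlam := (abs_sub_lt_iff.mp (lt_of_le_of_lt (le_add_of_nonneg_right dist_nonneg)
    (hcost.trans_le (min_le_right _ _)))).2
  have hdist : dist (x1 j) (x2 k) < δ :=
    lt_of_le_of_lt (le_add_of_nonneg_left (abs_nonneg _)) (hcost.trans_le (min_le_left _ _))
  have hφjk := (abs_sub_lt_iff.mp (Real.dist_eq _ _ ▸ hφ hdist)).1
  linarith

lemma eq_of_Hdist_eq_zero [CompactSpace X] (h1 : IsFinSuppIPM μ1) (h2 : IsFinSuppIPM μ2)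
    (h : Hdist μ1 μ2 = 0) : μ1 = μ2 :=
  funext fun φ => le_antisymm (le_of_Hdist_eq_zero h1 h2 h φ)
    (le_of_Hdist_eq_zero h2 h1 (Hdist_comm μ1 μ2 ▸ h) φ)

lemma IsFinSuppIPM.eq_of_subsingleton [Subsingleton X] (h1 : IsFinSuppIPM μ1)
    (h2 : IsFinSuppIPM μ2) : μ1 = μ2 := by
  obtain ⟨_, x1, _, hr1⟩ := h1
  obtain ⟨_, _, _, hr2⟩ := h2
  funext φ
  rw [hr1.apply_eq_of_subsingleton φ (x1 ⟨0, hr1.1⟩), hr2.apply_eq_of_subsingleton φ]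

lemma subsingleton_of_diam_univ_eq_zero [CompactSpace X]
    (h : Metric.diam (Set.univ : Set X) = 0) : Subsingleton X :=
  ⟨fun a b => dist_le_zero.mp
    (h ▸ Metric.dist_le_diam_of_mem isCompact_univ.isBounded (Set.mem_univ a) (Set.mem_univ b))⟩

end Separation

section RhoOmega

variable [MetricSpace X] {μ1 μ2 μ3 : C(X, ℝ) → ℝ}

lemma rhoOmega_nonneg (μ1 μ2 : C(X, ℝ) → ℝ) : 0 ≤ rhoOmega μ1 μ2 :=
  le_min Metric.diam_nonneg (Hdist_nonneg μ1 μ2)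

lemma rhoOmega_self (h : IsFinSuppIPM μ1) : rhoOmega μ1 μ1 = 0 := by
  rw [rhoOmega, Hdist_self h]
  exact min_eq_right Metric.diam_nonneg

lemma rhoOmega_comm (μ1 μ2 : C(X, ℝ) → ℝ) : rhoOmega μ1 μ2 = rhoOmega μ2 μ1 := by
  rw [rhoOmega, rhoOmega, Hdist_comm]

lemma eq_of_rhoOmega_eq_zero [CompactSpace X] (h1 : IsFinSuppIPM μ1) (h2 : IsFinSuppIPM μ2)
    (h : rhoOmega μ1 μ2 = 0) : μ1 = μ2 := by
  rcases min_eq_iff.mp h with ⟨hdiam, -⟩ | ⟨hH, -⟩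
  · have := subsingleton_of_diam_univ_eq_zero hdiam
    exact h1.eq_of_subsingleton h2
  · exact eq_of_Hdist_eq_zero h1 h2 hH

lemma rhoOmega_triangle (h1 : IsFinSuppIPM μ1) (h2 : IsFinSuppIPM μ2) (h3 : IsFinSuppIPM μ3) :
    rhoOmega μ1 μ3 ≤ rhoOmega μ1 μ2 + rhoOmega μ2 μ3 :=
  min_le_min_add_min Metric.diam_nonneg (Hdist_nonneg μ1 μ2) (Hdist_nonneg μ2 μ3)
    (Hdist_triangle h1 h2 h3)

end RhoOmega

/-- Corollary 1: `ρ_ω = min{diam X, H}` is a metric on the set of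
finitely supported idempotent probability measures. -/
theorem stmt9 [MetricSpace X] [CompactSpace X] :
    (∀ μ1 μ2 : C(X, ℝ) → ℝ, IsFinSuppIPM μ1 → IsFinSuppIPM μ2 →
      0 ≤ rhoOmega μ1 μ2) ∧
    (∀ μ1 μ2 : C(X, ℝ) → ℝ, IsFinSuppIPM μ1 → IsFinSuppIPM μ2 →
      (rhoOmega μ1 μ2 = 0 ↔ μ1 = μ2)) ∧
    (∀ μ1 μ2 : C(X, ℝ) → ℝ, IsFinSuppIPM μ1 → IsFinSuppIPM μ2 →
      rhoOmega μ1 μ2 = rhoOmega μ2 μ1) ∧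
    (∀ μ1 μ2 μ3 : C(X, ℝ) → ℝ, IsFinSuppIPM μ1 → IsFinSuppIPM μ2 → IsFinSuppIPM μ3 →
      rhoOmega μ1 μ3 ≤ rhoOmega μ1 μ2 + rhoOmega μ2 μ3) :=
  ⟨fun μ1 μ2 _ _ => rhoOmega_nonneg μ1 μ2,
    fun _ _ h1 h2 => ⟨eq_of_rhoOmega_eq_zero h1 h2, fun h => h ▸ rhoOmega_self h1⟩,
    fun μ1 μ2 _ _ => rhoOmega_comm μ1 μ2,
    fun _ _ _ h1 h2 h3 => rhoOmega_triangle h1 h2 h3⟩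
end

section
/- If (X, ρ) is an infinite compact metric space, then the metric space (I_ω(X), ρ_ω) is not complete: there exists a ρ_ω-Cauchy sequence of finitely supported idempotent probability measures that has no limit in I_ω(X) with respect to ρ_ω. -/
open Filter Topology

variable {X : Type*}

/- ### helpers -/

lemma fin_argmax {n : ℕ} (hn : 0 < n) (f : Fin n → ℝ) :
    ∃ i, (⨆ j, f j) = f i ∧ ∀ j, f j ≤ f i := by
  haveI : Nonempty (Fin n) := ⟨⟨0, hn⟩⟩
  obtain ⟨i, -, hi⟩ := Finset.exists_max_image Finset.univ f ⟨⟨0, hn⟩, Finset.mem_univ _⟩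
  exact ⟨i, le_antisymm (ciSup_le fun j => hi j (Finset.mem_univ _))
    (le_ciSup (Set.finite_range f).bddAbove i), fun j => hi j (Finset.mem_univ _)⟩

lemma costSet_bddAbove [MetricSpace X] {n1 n2 : ℕ}
    (x1 : Fin n1 → X) (lam1 : Fin n1 → ℝ) (x2 : Fin n2 → X) (lam2 : Fin n2 → ℝ)
    (γ : Fin n1 → Fin n2 → WithBot ℝ) :
    BddAbove {c : ℝ | ∃ j k, γ j k ≠ ⊥ ∧ c = |lam2 k - lam1 j| + dist (x1 j) (x2 k)} := by
  apply BddAbove.mono ?_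
    ((Set.finite_range (fun jk : Fin n1 × Fin n2 =>
      |lam2 jk.2 - lam1 jk.1| + dist (x1 jk.1) (x2 jk.2))).bddAbove)
  rintro c ⟨j, k, -, rfl⟩
  exact ⟨(j, k), rfl⟩

lemma row_attain {n1 n2 : ℕ} {lam1 : Fin n1 → ℝ} {γ : Fin n1 → Fin n2 → WithBot ℝ}
    (hn2 : 0 < n2) (j : Fin n1)
    (hrow : (Finset.univ.sup fun k => γ j k) = (lam1 j : WithBot ℝ)) :
    ∃ k, γ j k = (lam1 j : WithBot ℝ) := by
  obtain ⟨k, -, hk⟩ := Finset.exists_mem_eq_sup (Finset.univ : Finset (Fin n2))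
    ⟨⟨0, hn2⟩, Finset.mem_univ _⟩ (fun k => γ j k)
  exact ⟨k, by rw [← hk, hrow]⟩

lemma matCost_nonneg_s16 [MetricSpace X] {n1 n2 : ℕ} (hn1 : 0 < n1) (hn2 : 0 < n2)
    (x1 : Fin n1 → X) (lam1 : Fin n1 → ℝ) (x2 : Fin n2 → X) (lam2 : Fin n2 → ℝ)
    (γ : Fin n1 → Fin n2 → WithBot ℝ)
    (hrow : ∀ j, (Finset.univ.sup fun k => γ j k) = (lam1 j : WithBot ℝ)) :
    0 ≤ matCost x1 lam1 x2 lam2 γ := by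
  obtain ⟨k, hk⟩ := row_attain hn2 ⟨0, hn1⟩ (hrow _)
  have hmem : |lam2 k - lam1 ⟨0, hn1⟩| + dist (x1 ⟨0, hn1⟩) (x2 k) ∈
      {c : ℝ | ∃ j k, γ j k ≠ ⊥ ∧ c = |lam2 k - lam1 j| + dist (x1 j) (x2 k)} :=
    ⟨⟨0, hn1⟩, k, by rw [hk]; exact WithBot.coe_ne_bot, rfl⟩
  have := le_csSup (costSet_bddAbove x1 lam1 x2 lam2 γ) hmem
  have h0 : (0:ℝ) ≤ |lam2 k - lam1 ⟨0, hn1⟩| + dist (x1 ⟨0, hn1⟩) (x2 k) := by positivity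
  exact le_trans h0 this

lemma cost_bound [MetricSpace X] {μ1 μ2 : C(X, ℝ) → ℝ} {n1 n2 : ℕ}
    {x1 : Fin n1 → X} {lam1 : Fin n1 → ℝ} {x2 : Fin n2 → X} {lam2 : Fin n2 → ℝ}
    {γ : Fin n1 → Fin n2 → WithBot ℝ}
    (h1 : IsRepr μ1 x1 lam1) (h2 : IsRepr μ2 x2 lam2)
    (hγ : IsCouplingMatrix lam1 lam2 γ) (φ : C(X, ℝ)) (hφ : LipschitzWith 1 φ) :
    μ1 φ ≤ μ2 φ + matCost x1 lam1 x2 lam2 γ := by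
  obtain ⟨hn1, -, -, hrep1⟩ := h1
  obtain ⟨hn2, -, -, hrep2⟩ := h2
  obtain ⟨j0, hj0, -⟩ := fin_argmax hn1 (fun j => lam1 j + φ (x1 j))
  obtain ⟨k0, hk0⟩ := row_attain hn2 j0 (hγ.1 j0)
  have hle : lam1 j0 ≤ lam2 k0 := by
    have h : γ j0 k0 ≤ Finset.univ.sup fun j => γ j k0 :=
      Finset.le_sup (f := fun j => γ j k0) (Finset.mem_univ j0)
    rw [hγ.2 k0, hk0] at h
    exact_mod_cast h
  have hdist : φ (x1 j0) - φ (x2 k0) ≤ dist (x1 j0) (x2 k0) := by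
    have h := hφ.dist_le_mul (x1 j0) (x2 k0)
    rw [NNReal.coe_one, one_mul, Real.dist_eq] at h
    exact le_trans (le_abs_self _) h
  have hmem : |lam2 k0 - lam1 j0| + dist (x1 j0) (x2 k0) ≤ matCost x1 lam1 x2 lam2 γ :=
    le_csSup (costSet_bddAbove x1 lam1 x2 lam2 γ)
      ⟨j0, k0, by rw [hk0]; exact WithBot.coe_ne_bot, rfl⟩
  have hμ2 : lam2 k0 + φ (x2 k0) ≤ μ2 φ := by
    rw [hrep2 φ]
    exact le_ciSup (f := fun i => lam2 i + φ (x2 i)) (Set.finite_range _).bddAbove k0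
  have habs : lam1 j0 - lam2 k0 ≤ |lam2 k0 - lam1 j0| := by
    rw [abs_sub_comm]; exact le_abs_self _
  rw [hrep1 φ, hj0]
  linarith

lemma prodMatrix_coupling {n1 n2 : ℕ} {lam1 : Fin n1 → ℝ} {lam2 : Fin n2 → ℝ}
    (hn1 : 0 < n1) (hn2 : 0 < n2) (h1 : (⨆ i, lam1 i) = 0) (h2 : (⨆ i, lam2 i) = 0) :
    IsCouplingMatrix lam1 lam2 (fun j k => ((lam1 j + lam2 k : ℝ) : WithBot ℝ)) := by
  obtain ⟨k0, hk0, hmax2⟩ := fin_argmax hn2 lam2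
  obtain ⟨j0, hj0, hmax1⟩ := fin_argmax hn1 lam1
  have hk0z : lam2 k0 = 0 := by rw [← hk0, h2]
  have hj0z : lam1 j0 = 0 := by rw [← hj0, h1]
  constructor
  · intro j
    apply le_antisymm
    · apply Finset.sup_le; intro k _
      exact WithBot.coe_le_coe.mpr (by have := hmax2 k; rw [hk0z] at this; linarith)
    · have h := Finset.le_sup (f := fun k => ((lam1 j + lam2 k : ℝ) : WithBot ℝ))
        (Finset.mem_univ k0)
      simpa [hk0z] using h
  · intro k
    apply le_antisymm
    · apply Finset.sup_le; intro j _
      exact WithBot.coe_le_coe.mpr (by have := hmax1 j; rw [hj0z] at this; linarith)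
    · have h := Finset.le_sup (f := fun j => ((lam1 j + lam2 k : ℝ) : WithBot ℝ))
        (Finset.mem_univ j0)
      simpa [hj0z] using h

lemma Hdist_le [MetricSpace X] {μ1 μ2 : C(X, ℝ) → ℝ} {n1 n2 : ℕ}
    {x1 : Fin n1 → X} {lam1 : Fin n1 → ℝ} {x2 : Fin n2 → X} {lam2 : Fin n2 → ℝ}
    {γ : Fin n1 → Fin n2 → WithBot ℝ}
    (h1 : IsRepr μ1 x1 lam1) (h2 : IsRepr μ2 x2 lam2)
    (hγ : IsCouplingMatrix lam1 lam2 γ) :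
    Hdist μ1 μ2 ≤ matCost x1 lam1 x2 lam2 γ := by
  apply csInf_le
  · refine ⟨0, ?_⟩
    rintro c ⟨m1, m2, y1, k1, y2, k2, δ, hr1, hr2, hδ, rfl⟩
    exact matCost_nonneg_s16 hr1.1 hr2.1 y1 k1 y2 k2 δ hδ.1
  · exact ⟨n1, n2, x1, lam1, x2, lam2, γ, h1, h2, hγ, rfl⟩

lemma le_Hdist [MetricSpace X] {μ1 μ2 : C(X, ℝ) → ℝ}
    (h1 : IsFinSuppIPM μ1) (h2 : IsFinSuppIPM μ2)
    (φ : C(X, ℝ)) (hφ : LipschitzWith 1 φ) : μ1 φ - μ2 φ ≤ Hdist μ1 μ2 := by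
  obtain ⟨n1, x1, lam1, hr1⟩ := h1
  obtain ⟨n2, x2, lam2, hr2⟩ := h2
  apply le_csInf
  · exact ⟨_, n1, n2, x1, lam1, x2, lam2, _, hr1, hr2,
      prodMatrix_coupling hr1.1 hr2.1 hr1.2.2.1 hr2.2.2.1, rfl⟩
  · rintro c ⟨m1, m2, y1, k1, y2, k2, γ, hq1, hq2, hγ, rfl⟩
    linarith [cost_bound hq1 hq2 hγ φ hφ]
lemma bump_lipschitz [MetricSpace X] (p : X) (d : ℝ) :
    LipschitzWith 1 (fun z : X => max 0 (d - dist z p)) := by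
  apply LipschitzWith.of_dist_le_mul
  intro x y
  rw [Real.dist_eq, NNReal.coe_one, one_mul]
  have h1 : |max 0 (d - dist x p) - max 0 (d - dist y p)| ≤ |(d - dist x p) - (d - dist y p)| := by
    have := abs_max_sub_max_le_abs (d - dist x p) (d - dist y p) 0
    simpa [max_comm] using this
  have h2 : |(d - dist x p) - (d - dist y p)| = |dist y p - dist x p| := by ring_nf
  have h3 : |dist y p - dist x p| ≤ dist x y := by
    rw [abs_sub_comm]; exact abs_dist_sub_le x y p
  linarith


/-- for infinite compact `X`, the metric space `(I_ω(X), ρ_ω)` is not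
complete: there is a `ρ_ω`-Cauchy sequence of finitely supported idempotent
probability measures with no `ρ_ω`-limit in `I_ω(X)`. -/
theorem stmt16 [MetricSpace X] [CompactSpace X] [Infinite X] :
    ∃ μt : ℕ → C(X, ℝ) → ℝ,
      (∀ t, IsFinSuppIPM (μt t)) ∧
      (∀ ε > (0 : ℝ), ∃ N : ℕ, ∀ m ≥ N, ∀ n ≥ N, rhoOmega (μt m) (μt n) < ε) ∧
      ¬ ∃ μ : C(X, ℝ) → ℝ, IsFinSuppIPM μ ∧
        Tendsto (fun t => rhoOmega (μt t) μ) atTop (nhds 0) := by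
  classical
  obtain ⟨a, -, g, hg, hga⟩ := isCompact_univ.tendsto_subseq
    (x := fun n => (Infinite.natEmbedding X) n) (fun n => Set.mem_univ _)
  set b : ℕ → X := (fun n => (Infinite.natEmbedding X) n) ∘ g with hb_def
  have hb : Function.Injective b := (Infinite.natEmbedding X).injective.comp hg.injective
  have hba : Tendsto b atTop (nhds a) := hga
  set μt : ℕ → C(X, ℝ) → ℝ := fun t φ => ⨆ i : Fin (t + 1), ((0:ℝ) + φ (b i)) with hμt
  have hrepr : ∀ t, IsRepr (μt t) (fun i : Fin (t + 1) => b i) (fun _ => (0:ℝ)) := by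
    intro t
    exact ⟨Nat.succ_pos t, fun i j hij => Fin.val_injective (hb hij), ciSup_const, fun φ => rfl⟩
  refine ⟨μt, fun t => ⟨t + 1, _, _, hrepr t⟩, ?_, ?_⟩
  · -- Cauchy
    intro ε hε
    obtain ⟨N, hN⟩ := Metric.tendsto_atTop.mp hba (ε / 4) (by linarith)
    refine ⟨N, fun m hm n hn => ?_⟩
    set γ : Fin (m + 1) → Fin (n + 1) → WithBot ℝ :=
      fun j k => if (j : ℕ) = (k : ℕ) ∨ (N ≤ (j : ℕ) ∧ N ≤ (k : ℕ)) then ((0:ℝ) : WithBot ℝ)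
        else ⊥ with hγdef
    have hcm : IsCouplingMatrix (fun _ : Fin (m + 1) => (0:ℝ)) (fun _ : Fin (n + 1) => (0:ℝ)) γ := by
      constructor
      · intro j
        apply le_antisymm
        · apply Finset.sup_le; intro k _
          simp only [hγdef]
          split_ifs <;> simp
        · rcases le_or_gt N (j : ℕ) with h | h
          · have hk : N < n + 1 := by omega
            have hh := Finset.le_sup (f := fun k => γ j k)
              (Finset.mem_univ (⟨N, hk⟩ : Fin (n + 1)))
            simpa [hγdef, h] using hh
          · have hk : (j : ℕ) < n + 1 := by omega
            have hh := Finset.le_sup (f := fun k => γ j k)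
              (Finset.mem_univ (⟨(j : ℕ), hk⟩ : Fin (n + 1)))
            simpa [hγdef] using hh
      · intro k
        apply le_antisymm
        · apply Finset.sup_le; intro j _
          simp only [hγdef]
          split_ifs <;> simp
        · rcases le_or_gt N (k : ℕ) with h | h
          · have hj : N < m + 1 := by omega
            have hh := Finset.le_sup (f := fun j => γ j k)
              (Finset.mem_univ (⟨N, hj⟩ : Fin (m + 1)))
            simpa [hγdef, h] using hh
          · have hj : (k : ℕ) < m + 1 := by omega
            have hh := Finset.le_sup (f := fun j => γ j k)
              (Finset.mem_univ (⟨(k : ℕ), hj⟩ : Fin (m + 1)))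
            simpa [hγdef] using hh
    have hcost : matCost (fun i : Fin (m + 1) => b i) (fun _ => (0:ℝ))
        (fun i : Fin (n + 1) => b i) (fun _ => (0:ℝ)) γ ≤ ε / 2 := by
      apply Real.sSup_le
      · rintro c ⟨j, k, hne, rfl⟩
        simp only [sub_self, abs_zero, zero_add]
        by_cases h : (j : ℕ) = (k : ℕ) ∨ (N ≤ (j : ℕ) ∧ N ≤ (k : ℕ))
        · rcases h with h | ⟨h1, h2⟩
          · have : b (j : ℕ) = b (k : ℕ) := by rw [h]
            rw [this, dist_self]; linarith
          · have d1 := hN (j : ℕ) h1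
            have d2 := hN (k : ℕ) h2
            have := dist_triangle_right (b (j : ℕ)) (b (k : ℕ)) a
            linarith
        · exact absurd (by simp [hγdef, h]) hne
      · linarith
    calc rhoOmega (μt m) (μt n) ≤ Hdist (μt m) (μt n) := min_le_right _ _
      _ ≤ _ := Hdist_le (hrepr m) (hrepr n) hcm
      _ ≤ ε / 2 := hcost
      _ < ε := by linarith
  · -- no limit
    rintro ⟨μ, hfs, htend⟩
    obtain ⟨n, x, lam, hrep⟩ := id hfs
    have hex : ∃ i0 : ℕ, b i0 ∉ Set.range x := by
      by_contra h
      push_neg at h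
      have hsub : Set.range b ⊆ Set.range x := by rintro _ ⟨i, rfl⟩; exact h i
      exact (Set.infinite_range_of_injective hb) ((Set.finite_range x).subset hsub)
    obtain ⟨i0, hp⟩ := hex
    obtain ⟨i1, -, hi1⟩ := Finset.exists_min_image Finset.univ (fun i => dist (x i) (b i0))
      ⟨⟨0, hrep.1⟩, Finset.mem_univ _⟩
    set δ := dist (x i1) (b i0) with hδdef
    have hδpos : 0 < δ := dist_pos.mpr (fun h => hp ⟨i1, h⟩)
    have hlip : LipschitzWith 1 (fun z : X => max 0 (δ - dist z (b i0))) :=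
      bump_lipschitz (b i0) δ
    set φ : C(X, ℝ) := ⟨fun z => max 0 (δ - dist z (b i0)), hlip.continuous⟩ with hφdef
    have hφx : ∀ i, φ (x i) = 0 := by
      intro i
      have h := hi1 i (Finset.mem_univ i)
      show max 0 (δ - dist (x i) (b i0)) = 0
      exact max_eq_left (by linarith)
    have hμφ : μ φ = 0 := by
      rw [hrep.2.2.2 φ]
      simp only [hφx, add_zero]
      exact hrep.2.2.1
    have hφp : φ (b i0) = δ := by
      show max 0 (δ - dist (b i0) (b i0)) = δ
      rw [dist_self, sub_zero]
      exact max_eq_right hδpos.le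
    obtain ⟨x0, y0, hxy⟩ := exists_pair_ne X
    have hd : 0 < Metric.diam (Set.univ : Set X) :=
      lt_of_lt_of_le (dist_pos.mpr hxy)
        (Metric.dist_le_diam_of_mem isCompact_univ.isBounded trivial trivial)
    set c := min (Metric.diam (Set.univ : Set X)) δ with hcdef
    have hc : 0 < c := lt_min hd hδpos
    obtain ⟨t, hti, htc⟩ := ((eventually_ge_atTop i0).and
      (htend (Iio_mem_nhds hc))).exists
    have htc' : rhoOmega (μt t) μ < c := htc
    have hμtφ : δ ≤ μt t φ := by
      rw [(hrepr t).2.2.2 φ]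
      have hle := le_ciSup (f := fun i : Fin (t + 1) => (0:ℝ) + φ (b (i : ℕ)))
        (Set.finite_range _).bddAbove (⟨i0, by omega⟩ : Fin (t + 1))
      simpa [hφp] using hle
    have hH : δ ≤ Hdist (μt t) μ := by
      have hb' := le_Hdist ⟨t + 1, _, _, hrepr t⟩ hfs φ hlip
      linarith
    have hge : c ≤ rhoOmega (μt t) μ := min_le_min le_rfl hH
    exact absurd htc' (not_lt.mpr hge)
end
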